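/- arXiv:2105.05833 — 3 statements merged into one kernel-verified Lean document; each statement's English description precedes it below -/
import Mathlib

section
/- Let Q be a generalised quadrangle of order (s,t) with s,t ≥ 1, let Γ be its point-line incidence graph, and let C be a code in Γ with |C| ≥ 2 and C not equal to the whole vertex set of Γ. If some group of automorphisms of Γ preserving C setwise acts transitively on C, then C is not perfect; that is, the covering radius ρ of C is not equal to ⌊(δ−1)/2⌋, where δ is the minimum distance of C. -/
/-- A finite generalised quadrangle of order `(s,t)`: each point is on `t+1` lines,
each line has `s+1` points, two distinct points lie on at most one common line,
two distinct lines meet in at most one common point, and for each non-incident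
point-line pair `(p, ℓ)` there is a unique pair `(q, M)` with `p I M`, `q I M`
and `q I ℓ`. -/
structure GenQuad (P L : Type*) (s t : ℕ) where
  I : P → L → Prop
  point_deg : ∀ p : P, Nat.card {ℓ : L // I p ℓ} = t + 1
  line_deg : ∀ ℓ : L, Nat.card {p : P // I p ℓ} = s + 1
  points_one_line : ∀ p₁ p₂ : P, p₁ ≠ p₂ → ∀ ℓ₁ ℓ₂ : L,
    I p₁ ℓ₁ → I p₂ ℓ₁ → I p₁ ℓ₂ → I p₂ ℓ₂ → ℓ₁ = ℓ₂
  lines_one_point : ∀ ℓ₁ ℓ₂ : L, ℓ₁ ≠ ℓ₂ → ∀ p₁ p₂ : P,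
    I p₁ ℓ₁ → I p₁ ℓ₂ → I p₂ ℓ₁ → I p₂ ℓ₂ → p₁ = p₂
  gq_axiom : ∀ (p : P) (ℓ : L), ¬ I p ℓ →
    ∃! qM : P × L, I p qM.2 ∧ I qM.1 qM.2 ∧ I qM.1 ℓ

/-- The point-line incidence graph of a generalised quadrangle. -/
def incGraph {P L : Type*} {s t : ℕ} (Q : GenQuad P L s t) : SimpleGraph (P ⊕ L) where
  Adj x y :=
    (∃ p ℓ, x = Sum.inl p ∧ y = Sum.inr ℓ ∧ Q.I p ℓ) ∨
    (∃ p ℓ, x = Sum.inr ℓ ∧ y = Sum.inl p ∧ Q.I p ℓ)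
  symm := by
    constructor
    rintro x y (⟨p, ℓ, rfl, rfl, h⟩ | ⟨p, ℓ, rfl, rfl, h⟩)
    · exact Or.inr ⟨p, ℓ, rfl, rfl, h⟩
    · exact Or.inl ⟨p, ℓ, rfl, rfl, h⟩
  loopless := by
    constructor
    rintro x (⟨p, ℓ, rfl, h, -⟩ | ⟨p, ℓ, rfl, h, -⟩) <;> exact absurd h (by simp)

/-- The minimum distance of a code `C` in a graph `Γ`. -/
noncomputable def minDist {V : Type*} (Γ : SimpleGraph V) (C : Set V) : ℕ :=
  sInf {d | ∃ x ∈ C, ∃ y ∈ C, x ≠ y ∧ Γ.dist x y = d}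

/-- The distance from a vertex `γ` to a code `C`. -/
noncomputable def distToCode {V : Type*} (Γ : SimpleGraph V) (C : Set V) (γ : V) : ℕ :=
  sInf {d | ∃ x ∈ C, Γ.dist γ x = d}

/-- The covering radius of a code `C` in a graph `Γ`. -/
noncomputable def covRad {V : Type*} (Γ : SimpleGraph V) (C : Set V) : ℕ :=
  sSup {d | ∃ γ : V, distToCode Γ C γ = d}

/-- `nbhd Γ C i` is the set `C_i` of vertices at distance exactly `i` from `C`. -/
def nbhd {V : Type*} (Γ : SimpleGraph V) (C : Set V) (i : ℕ) : Set V :=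
  {γ | distToCode Γ C γ = i}

/-- `g` is an automorphism of the graph `Γ`. -/
def IsGraphAut {V : Type*} (Γ : SimpleGraph V) (g : V ≃ V) : Prop :=
  ∀ x y : V, Γ.Adj (g x) (g y) ↔ Γ.Adj x y

/-- `Aut(C)` (automorphisms of `Γ` preserving `C` setwise) acts transitively on `S`. -/
def TransOn {V : Type*} (Γ : SimpleGraph V) (C S : Set V) : Prop :=
  ∀ x ∈ S, ∀ y ∈ S, ∃ g : V ≃ V, IsGraphAut Γ g ∧ (∀ v, g v ∈ C ↔ v ∈ C) ∧ g x = y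

/-- `C` is neighbour-transitive: `Aut(C)` is transitive on `C` and on `C₁`. -/
def NeighbourTransitive {V : Type*} (Γ : SimpleGraph V) (C : Set V) : Prop :=
  TransOn Γ C C ∧ TransOn Γ C (nbhd Γ C 1)

namespace GQaux

open Finset

set_option linter.unusedSectionVars false

attribute [local instance] Classical.propDecidable

/-- The dual generalised quadrangle. -/
def dual {P L : Type*} {s t : ℕ} (Q : GenQuad P L s t) : GenQuad L P t s where
  I := fun ℓ p => Q.I p ℓ
  point_deg := Q.line_deg
  line_deg := Q.point_deg
  points_one_line := Q.lines_one_point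
  lines_one_point := Q.points_one_line
  gq_axiom := by
    intro ℓ p h
    obtain ⟨⟨q, M⟩, ⟨hA, hB, hC⟩, hu⟩ := Q.gq_axiom p ℓ h
    refine ⟨(M, q), ⟨hC, hB, hA⟩, ?_⟩
    rintro ⟨M', q'⟩ ⟨h1, h2, h3⟩
    have := hu (q', M') ⟨h3, h2, h1⟩
    simp only [Prod.mk.injEq] at this ⊢
    exact ⟨this.2, this.1⟩

variable {P L : Type*} {s t : ℕ}

lemma nonempty_line_through (Q : GenQuad P L s t) (p : P) : ∃ ℓ, Q.I p ℓ := by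
  have h := Q.point_deg p
  have : 0 < Nat.card {ℓ : L // Q.I p ℓ} := by omega
  rw [Nat.card_pos_iff] at this
  obtain ⟨⟨ℓ, hℓ⟩⟩ := this.1
  exact ⟨ℓ, hℓ⟩

lemma nonempty_point_on (Q : GenQuad P L s t) (ℓ : L) : ∃ p, Q.I p ℓ :=
  nonempty_line_through (dual Q) ℓ

variable [Fintype P] [Fintype L]

lemma linesThru_card (Q : GenQuad P L s t) (p : P) :
    (univ.filter fun ℓ => Q.I p ℓ).card = t + 1 := by
  have h := Q.point_deg p
  rwa [Nat.card_eq_fintype_card, Fintype.card_subtype] at h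

lemma pointsOn_card (Q : GenQuad P L s t) (ℓ : L) :
    (univ.filter fun p => Q.I p ℓ).card = s + 1 := by
  have h := Q.line_deg ℓ
  rwa [Nat.card_eq_fintype_card, Fintype.card_subtype] at h

/-- The number of points collinear with (and distinct from) a given point. -/
lemma perp_card (Q : GenQuad P L s t) (p : P) :
    (univ.filter fun r => r ≠ p ∧ ∃ M, Q.I p M ∧ Q.I r M).card = (t + 1) * s := by
  have hL : Nonempty L := ⟨(nonempty_line_through Q p).choose⟩
  have hfspec : ∀ r : P, (∃ M, Q.I p M ∧ Q.I r M) →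
      Q.I p (Classical.epsilon fun M => Q.I p M ∧ Q.I r M) ∧
      Q.I r (Classical.epsilon fun M => Q.I p M ∧ Q.I r M) :=
    fun r hex => Classical.epsilon_spec hex
  have H : ∀ r ∈ (univ.filter fun r => r ≠ p ∧ ∃ M, Q.I p M ∧ Q.I r M),
      (Classical.epsilon fun M => Q.I p M ∧ Q.I r M) ∈ (univ.filter fun ℓ => Q.I p ℓ) := by
    intro r hr
    rw [mem_filter] at hr
    exact mem_filter.2 ⟨mem_univ _, (hfspec r hr.2.2).1⟩
  rw [card_eq_sum_card_fiberwise H]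
  have key : ∀ M ∈ (univ.filter fun ℓ => Q.I p ℓ),
      ((univ.filter fun r => r ≠ p ∧ ∃ M', Q.I p M' ∧ Q.I r M').filter
        fun r => (Classical.epsilon fun M' => Q.I p M' ∧ Q.I r M') = M).card = s := by
    intro M hM
    rw [mem_filter] at hM
    have hfib : ((univ.filter fun r => r ≠ p ∧ ∃ M', Q.I p M' ∧ Q.I r M').filter
        fun r => (Classical.epsilon fun M' => Q.I p M' ∧ Q.I r M') = M)
        = (univ.filter fun r => Q.I r M).erase p := by
      ext r
      rw [mem_filter, mem_filter, mem_erase, mem_filter]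
      constructor
      · rintro ⟨⟨-, hne, hex⟩, hfr⟩
        exact ⟨hne, mem_univ _, hfr ▸ (hfspec r hex).2⟩
      · rintro ⟨hne, -, hrM⟩
        have hex : ∃ M', Q.I p M' ∧ Q.I r M' := ⟨M, hM.2, hrM⟩
        obtain ⟨h1, h2⟩ := hfspec r hex
        exact ⟨⟨mem_univ _, hne, hex⟩,
          Q.points_one_line r p hne _ _ h2 h1 hrM hM.2⟩
    rw [hfib, card_erase_of_mem (s := univ.filter fun r => Q.I r M)
      (mem_filter.2 ⟨mem_univ _, hM.2⟩), pointsOn_card Q M]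
    omega
  calc ∑ M ∈ (univ.filter fun ℓ => Q.I p ℓ), _ = ∑ M ∈ (univ.filter fun ℓ => Q.I p ℓ), s :=
        Finset.sum_congr rfl key
    _ = (t+1) * s := by rw [Finset.sum_const, smul_eq_mul, linesThru_card Q p]


/-- In the mixed perfect-code situation, the number of code lines is `(t+1)*s`,
counted from any code point. -/
lemma card_CL (Q : GenQuad P L s t) (CP : Set P) (CL : Set L)
    (h1 : ∀ p ∈ CP, ∀ ℓ ∈ CL, ¬ Q.I p ℓ)
    (h2 : ∀ p₁ ∈ CP, ∀ p₂ ∈ CP, ∀ M, Q.I p₁ M → Q.I p₂ M → p₁ = p₂)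
    (h3 : ∀ ℓ₁ ∈ CL, ∀ ℓ₂ ∈ CL, ∀ q, Q.I q ℓ₁ → Q.I q ℓ₂ → ℓ₁ = ℓ₂)
    (h4 : ∀ p, p ∉ CP → ∃ ℓ ∈ CL, Q.I p ℓ)
    {p : P} (hp : p ∈ CP) :
    (univ.filter fun ℓ => ℓ ∈ CL).card = (t + 1) * s := by
  have hL : Nonempty L := ⟨(nonempty_line_through Q p).choose⟩
  rw [← perp_card Q p]
  symm
  -- map each point collinear with p to the unique code line through it
  refine card_bij (fun r _ => Classical.epsilon fun ℓ => ℓ ∈ CL ∧ Q.I r ℓ) ?_ ?_ ?_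
  · -- maps into CL
    intro r hr
    rw [mem_filter] at hr
    obtain ⟨-, hne, M, hpM, hrM⟩ := hr
    have hrnC : r ∉ CP := fun hrC => hne (h2 r hrC p hp M hrM hpM)
    obtain ⟨ℓ, hℓCL, hrℓ⟩ := h4 r hrnC
    have := Classical.epsilon_spec (⟨ℓ, hℓCL, hrℓ⟩ : ∃ ℓ, ℓ ∈ CL ∧ Q.I r ℓ)
    exact mem_filter.2 ⟨mem_univ _, this.1⟩
  · -- injective
    intro r₁ hr₁ r₂ hr₂ heq
    rw [mem_filter] at hr₁ hr₂
    obtain ⟨-, hne₁, M₁, hpM₁, hrM₁⟩ := hr₁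
    obtain ⟨-, hne₂, M₂, hpM₂, hrM₂⟩ := hr₂
    have hrnC₁ : r₁ ∉ CP := fun hrC => hne₁ (h2 r₁ hrC p hp M₁ hrM₁ hpM₁)
    have hrnC₂ : r₂ ∉ CP := fun hrC => hne₂ (h2 r₂ hrC p hp M₂ hrM₂ hpM₂)
    obtain ⟨ℓ₁', hℓ₁, hr₁ℓ⟩ := h4 r₁ hrnC₁
    obtain ⟨ℓ₂', hℓ₂, hr₂ℓ⟩ := h4 r₂ hrnC₂
    have hs₁ := Classical.epsilon_spec (⟨ℓ₁', hℓ₁, hr₁ℓ⟩ : ∃ ℓ, ℓ ∈ CL ∧ Q.I r₁ ℓ)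
    have hs₂ := Classical.epsilon_spec (⟨ℓ₂', hℓ₂, hr₂ℓ⟩ : ∃ ℓ, ℓ ∈ CL ∧ Q.I r₂ ℓ)
    have heq' : (Classical.epsilon fun ℓ => ℓ ∈ CL ∧ Q.I r₁ ℓ)
        = Classical.epsilon fun ℓ => ℓ ∈ CL ∧ Q.I r₂ ℓ := heq
    set ℓ := Classical.epsilon fun ℓ => ℓ ∈ CL ∧ Q.I r₁ ℓ with hℓdef
    have hs₂' : ℓ ∈ CL ∧ Q.I r₂ ℓ := heq' ▸ hs₂
    have hnpℓ : ¬ Q.I p ℓ := h1 p hp ℓ hs₁.1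
    obtain ⟨w, hw, hu⟩ := Q.gq_axiom p ℓ hnpℓ
    have e₁ := hu (r₁, M₁) ⟨hpM₁, hrM₁, hs₁.2⟩
    have e₂ := hu (r₂, M₂) ⟨hpM₂, hrM₂, hs₂'.2⟩
    have : (r₁, M₁) = (r₂, M₂) := e₁.trans e₂.symm
    exact (Prod.mk.injEq .. ▸ this).1
  · -- surjective
    intro ℓ hℓ
    rw [mem_filter] at hℓ
    have hnpℓ : ¬ Q.I p ℓ := h1 p hp ℓ hℓ.2
    obtain ⟨⟨q, M⟩, ⟨hpM, hqM, hqℓ⟩, -⟩ := Q.gq_axiom p ℓ hnpℓ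
    have hqne : q ≠ p := fun h => hnpℓ (h ▸ hqℓ)
    refine ⟨q, mem_filter.2 ⟨mem_univ _, hqne, M, hpM, hqM⟩, ?_⟩
    have hs' := Classical.epsilon_spec (⟨ℓ, hℓ.2, hqℓ⟩ : ∃ ℓ', ℓ' ∈ CL ∧ Q.I q ℓ')
    show (Classical.epsilon fun ℓ' => ℓ' ∈ CL ∧ Q.I q ℓ') = ℓ
    exact h3 _ hs'.1 _ hℓ.2 q hs'.2 hqℓ

/-- Every point is a code point or lies on a unique code line: partition count. -/
lemma card_P_partition (Q : GenQuad P L s t) (CP : Set P) (CL : Set L)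
    (hCLne : CL.Nonempty)
    (h1 : ∀ p ∈ CP, ∀ ℓ ∈ CL, ¬ Q.I p ℓ)
    (h3 : ∀ ℓ₁ ∈ CL, ∀ ℓ₂ ∈ CL, ∀ q, Q.I q ℓ₁ → Q.I q ℓ₂ → ℓ₁ = ℓ₂)
    (h4 : ∀ p, p ∉ CP → ∃ ℓ ∈ CL, Q.I p ℓ) :
    Fintype.card P =
      (univ.filter fun p => p ∈ CP).card + (univ.filter fun ℓ => ℓ ∈ CL).card * (s + 1) := by
  have hL : Nonempty L := ⟨hCLne.choose⟩
  have hsplit := card_filter_add_card_filter_not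
    (s := (univ : Finset P)) (p := fun p => p ∈ CP)
  rw [card_univ] at hsplit
  rw [← hsplit]
  congr 1
  -- count of non-code points, fibered over code lines
  have H : ∀ r ∈ (univ.filter fun p => ¬ p ∈ CP),
      (Classical.epsilon fun ℓ => ℓ ∈ CL ∧ Q.I r ℓ) ∈ (univ.filter fun ℓ => ℓ ∈ CL) := by
    intro r hr
    rw [mem_filter] at hr
    have := Classical.epsilon_spec (h4 r hr.2 : ∃ ℓ, ℓ ∈ CL ∧ Q.I r ℓ)
    exact mem_filter.2 ⟨mem_univ _, this.1⟩
  rw [card_eq_sum_card_fiberwise H]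
  refine Finset.sum_const_nat ?_
  intro ℓ hℓ
  rw [mem_filter] at hℓ
  have hfib : ((univ.filter fun p => ¬ p ∈ CP).filter
      fun r => (Classical.epsilon fun ℓ' => ℓ' ∈ CL ∧ Q.I r ℓ') = ℓ)
      = univ.filter fun r => Q.I r ℓ := by
    ext r
    rw [mem_filter, mem_filter, mem_filter]
    constructor
    · rintro ⟨⟨-, hrnC⟩, hfr⟩
      have := Classical.epsilon_spec (h4 r hrnC : ∃ ℓ', ℓ' ∈ CL ∧ Q.I r ℓ')
      exact ⟨mem_univ _, hfr ▸ this.2⟩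
    · rintro ⟨-, hrℓ⟩
      have hrnC : r ∉ CP := fun hrC => h1 r hrC ℓ hℓ.2 hrℓ
      have hsp := Classical.epsilon_spec (h4 r hrnC : ∃ ℓ', ℓ' ∈ CL ∧ Q.I r ℓ')
      exact ⟨⟨mem_univ _, hrnC⟩, h3 _ hsp.1 _ hℓ.2 r hsp.2 hrℓ⟩
  rw [hfib, pointsOn_card Q ℓ]

/-- The standard count of points of a generalised quadrangle, provided a line exists. -/
lemma card_P_total (Q : GenQuad P L s t) (ℓ₀ : L) :
    Fintype.card P = (s + 1) * (s * t + 1) := by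
  have hP : Nonempty P := ⟨(nonempty_point_on Q ℓ₀).choose⟩
  have hsplit := card_filter_add_card_filter_not
    (s := (univ : Finset P)) (p := fun p => Q.I p ℓ₀)
  rw [card_univ] at hsplit
  rw [← hsplit, pointsOn_card Q ℓ₀]
  have H : ∀ r ∈ (univ.filter fun p => ¬ Q.I p ℓ₀),
      (Classical.epsilon fun q => Q.I q ℓ₀ ∧ ∃ M, Q.I r M ∧ Q.I q M)
        ∈ (univ.filter fun p => Q.I p ℓ₀) := by
    intro r hr
    rw [mem_filter] at hr
    obtain ⟨⟨q, M⟩, ⟨hrM, hqM, hqℓ⟩, -⟩ := Q.gq_axiom r ℓ₀ hr.2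
    have := Classical.epsilon_spec
      (⟨q, hqℓ, M, hrM, hqM⟩ : ∃ q', Q.I q' ℓ₀ ∧ ∃ M', Q.I r M' ∧ Q.I q' M')
    exact mem_filter.2 ⟨mem_univ _, this.1⟩
  rw [card_eq_sum_card_fiberwise H]
  have key : ∀ q ∈ (univ.filter fun p => Q.I p ℓ₀),
      ((univ.filter fun p => ¬ Q.I p ℓ₀).filter
        fun r => (Classical.epsilon fun q' => Q.I q' ℓ₀ ∧ ∃ M, Q.I r M ∧ Q.I q' M) = q).card
      = t * s := by
    intro q hq
    rw [mem_filter] at hq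
    -- the fiber over q consists of points collinear with q but not on ℓ₀
    have hfib : ((univ.filter fun p => ¬ Q.I p ℓ₀).filter
        fun r => (Classical.epsilon fun q' => Q.I q' ℓ₀ ∧ ∃ M, Q.I r M ∧ Q.I q' M) = q)
        = (univ.filter fun r => r ≠ q ∧ ∃ M, Q.I q M ∧ Q.I r M).filter
            fun r => ¬ Q.I r ℓ₀ := by
      ext r
      rw [mem_filter, mem_filter, mem_filter, mem_filter]
      constructor
      · rintro ⟨⟨-, hrℓ₀⟩, hfr⟩
        obtain ⟨⟨q', M'⟩, ⟨hrM', hq'M', hq'ℓ⟩, -⟩ := Q.gq_axiom r ℓ₀ hrℓ₀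
        have hsp := Classical.epsilon_spec
          (⟨q', hq'ℓ, M', hrM', hq'M'⟩ : ∃ q'', Q.I q'' ℓ₀ ∧ ∃ M'', Q.I r M'' ∧ Q.I q'' M'')
        obtain ⟨-, M'', hrM'', hqM''⟩ := hfr ▸ hsp
        have hrne : r ≠ q := fun h => hrℓ₀ (h ▸ hq.2)
        exact ⟨⟨mem_univ _, hrne, M'', hqM'', hrM''⟩, hrℓ₀⟩
      · rintro ⟨⟨-, hrne, M, hqM, hrM⟩, hrℓ₀⟩
        refine ⟨⟨mem_univ _, hrℓ₀⟩, ?_⟩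
        have hsp := Classical.epsilon_spec
          (⟨q, hq.2, M, hrM, hqM⟩ : ∃ q', Q.I q' ℓ₀ ∧ ∃ M', Q.I r M' ∧ Q.I q' M')
        obtain ⟨hq'ℓ, M', hrM', hq'M'⟩ := hsp
        obtain ⟨w, hw, hu⟩ := Q.gq_axiom r ℓ₀ hrℓ₀
        have e₁ := hu (_, M') ⟨hrM', hq'M', hq'ℓ⟩
        have e₂ := hu (q, M) ⟨hrM, hqM, hq.2⟩
        have : ((Classical.epsilon fun q' => Q.I q' ℓ₀ ∧ ∃ M, Q.I r M ∧ Q.I q' M), M')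
            = (q, M) := e₁.trans e₂.symm
        exact (Prod.mk.injEq .. ▸ this).1
    rw [hfib]
    -- split the perp of q by incidence with ℓ₀
    have hsplit2 := card_filter_add_card_filter_not
      (s := univ.filter fun r => r ≠ q ∧ ∃ M, Q.I q M ∧ Q.I r M)
      (p := fun r => Q.I r ℓ₀)
    rw [perp_card Q q] at hsplit2
    have honl : ((univ.filter fun r => r ≠ q ∧ ∃ M, Q.I q M ∧ Q.I r M).filter
        fun r => Q.I r ℓ₀) = (univ.filter fun r => Q.I r ℓ₀).erase q := by
      ext r
      rw [mem_filter, mem_filter, mem_erase, mem_filter]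
      constructor
      · rintro ⟨⟨-, hrne, -⟩, hrℓ⟩
        exact ⟨hrne, mem_univ _, hrℓ⟩
      · rintro ⟨hrne, -, hrℓ⟩
        exact ⟨⟨mem_univ _, hrne, ℓ₀, hq.2, hrℓ⟩, hrℓ⟩
    rw [honl, card_erase_of_mem (s := univ.filter fun r => Q.I r ℓ₀)
      (mem_filter.2 ⟨mem_univ _, hq.2⟩), pointsOn_card Q ℓ₀] at hsplit2
    have hbeta : ((univ.filter fun r => r ≠ q ∧ ∃ M, Q.I q M ∧ Q.I r M).filter
        fun a => ¬ (fun r => Q.I r ℓ₀) a)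
        = ((univ.filter fun r => r ≠ q ∧ ∃ M, Q.I q M ∧ Q.I r M).filter
        fun r => ¬ Q.I r ℓ₀) := rfl
    rw [hbeta, add_mul, one_mul] at hsplit2
    omega
  rw [Finset.sum_congr rfl key, Finset.sum_const, smul_eq_mul, pointsOn_card Q ℓ₀]
  ring


/-- The mixed case is impossible: a "perfect code configuration" with at least one
code point and one code line leads to a numerical contradiction. -/
lemma mixed_false (Q : GenQuad P L s t) (hs : 1 ≤ s) (ht : 1 ≤ t)
    (CP : Set P) (CL : Set L) (hCPne : CP.Nonempty) (hCLne : CL.Nonempty)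
    (h1 : ∀ p ∈ CP, ∀ ℓ ∈ CL, ¬ Q.I p ℓ)
    (h2 : ∀ p₁ ∈ CP, ∀ p₂ ∈ CP, ∀ M, Q.I p₁ M → Q.I p₂ M → p₁ = p₂)
    (h3 : ∀ ℓ₁ ∈ CL, ∀ ℓ₂ ∈ CL, ∀ q, Q.I q ℓ₁ → Q.I q ℓ₂ → ℓ₁ = ℓ₂)
    (h4 : ∀ p, p ∉ CP → ∃ ℓ ∈ CL, Q.I p ℓ)
    (h5 : ∀ ℓ, ℓ ∉ CL → ∃ p ∈ CP, Q.I p ℓ) : False := by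
  obtain ⟨p₀, hp₀⟩ := hCPne
  obtain ⟨ℓ₀, hℓ₀⟩ := hCLne
  have hCL := card_CL Q CP CL h1 h2 h3 h4 hp₀
  have hCP := card_CL (dual Q) CL CP
      (fun ℓ hℓ p hp hI => h1 p hp ℓ hℓ hI)
      (fun ℓ₁ hℓ₁ ℓ₂ hℓ₂ q hq1 hq2 => h3 ℓ₁ hℓ₁ ℓ₂ hℓ₂ q hq1 hq2)
      (fun p₁ hp₁ p₂ hp₂ M hI1 hI2 => h2 p₁ hp₁ p₂ hp₂ M hI1 hI2)
      (fun ℓ hℓ => h5 ℓ hℓ) hℓ₀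
  have hpart := card_P_partition Q CP CL ⟨ℓ₀, hℓ₀⟩ h1 h3 h4
  have htot := card_P_total Q ℓ₀
  rw [hCP, hCL, htot] at hpart
  -- (s+1)*(s*t+1) = (s+1)*t + (t+1)*s*(s+1), i.e. s*t+1 = t + s*t + s, i.e. s+t = 1
  have hfact : (s + 1) * t + (t + 1) * s * (s + 1) = (s + 1) * (t + (t + 1) * s) := by ring
  rw [hfact] at hpart
  have hcanc := Nat.eq_of_mul_eq_mul_left (Nat.succ_pos s) hpart
  have hexp : (t + 1) * s = t * s + s := by ring
  rw [hexp, Nat.mul_comm t s] at hcanc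
  omega

end GQaux

section Graph

variable {P L : Type*} {s t : ℕ}

lemma adj_inl_inr (Q : GenQuad P L s t) {p : P} {ℓ : L} :
    (incGraph Q).Adj (Sum.inl p) (Sum.inr ℓ) ↔ Q.I p ℓ := by
  constructor
  · rintro (⟨p', ℓ', h1, h2, h⟩ | ⟨p', ℓ', h1, h2, h⟩) <;> simp_all
  · intro h; exact Or.inl ⟨p, ℓ, rfl, rfl, h⟩

lemma adj_inr_inl (Q : GenQuad P L s t) {p : P} {ℓ : L} :
    (incGraph Q).Adj (Sum.inr ℓ) (Sum.inl p) ↔ Q.I p ℓ := by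
  constructor
  · rintro (⟨p', ℓ', h1, h2, h⟩ | ⟨p', ℓ', h1, h2, h⟩) <;> simp_all
  · intro h; exact Or.inr ⟨p, ℓ, rfl, rfl, h⟩

lemma not_adj_inl_inl (Q : GenQuad P L s t) {p p' : P} :
    ¬ (incGraph Q).Adj (Sum.inl p) (Sum.inl p') := by
  rintro (⟨a, b, h1, h2, h⟩ | ⟨a, b, h1, h2, h⟩) <;> simp_all

lemma not_adj_inr_inr (Q : GenQuad P L s t) {ℓ ℓ' : L} :
    ¬ (incGraph Q).Adj (Sum.inr ℓ) (Sum.inr ℓ') := by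
  rintro (⟨a, b, h1, h2, h⟩ | ⟨a, b, h1, h2, h⟩) <;> simp_all

lemma walk_pl (Q : GenQuad P L s t) (p : P) (ℓ : L) :
    ∃ w : (incGraph Q).Walk (Sum.inl p) (Sum.inr ℓ), w.length ≤ 3 := by
  by_cases h : Q.I p ℓ
  · exact ⟨.cons ((adj_inl_inr Q).2 h) .nil, by simp⟩
  · obtain ⟨⟨q, M⟩, ⟨hpM, hqM, hqℓ⟩, -⟩ := Q.gq_axiom p ℓ h
    exact ⟨.cons ((adj_inl_inr Q).2 hpM) (.cons ((adj_inr_inl Q).2 hqM)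
      (.cons ((adj_inl_inr Q).2 hqℓ) .nil)), by simp⟩

lemma walk_any (Q : GenQuad P L s t) (x y : P ⊕ L) :
    ∃ w : (incGraph Q).Walk x y, w.length ≤ 4 := by
  cases x with
  | inl p =>
    cases y with
    | inl p' =>
      obtain ⟨ℓ', hℓ'⟩ := GQaux.nonempty_line_through Q p'
      obtain ⟨w, hw⟩ := walk_pl Q p ℓ'
      exact ⟨w.append (.cons ((adj_inr_inl Q).2 hℓ') .nil), by
        simp [SimpleGraph.Walk.length_append]; omega⟩
    | inr ℓ' =>
      obtain ⟨w, hw⟩ := walk_pl Q p ℓ'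
      exact ⟨w, by omega⟩
  | inr ℓ =>
    cases y with
    | inl p' =>
      obtain ⟨w, hw⟩ := walk_pl Q p' ℓ
      exact ⟨w.reverse, by simp [SimpleGraph.Walk.length_reverse]; omega⟩
    | inr ℓ' =>
      obtain ⟨p', hp'⟩ := GQaux.nonempty_point_on Q ℓ
      obtain ⟨w, hw⟩ := walk_pl Q p' ℓ'
      exact ⟨(SimpleGraph.Walk.cons ((adj_inr_inl Q).2 hp') w), by
        simp [SimpleGraph.Walk.length_cons]; omega⟩

lemma exists_second_point [Finite P] (Q : GenQuad P L s t) (hs : 1 ≤ s) (ℓ : L) (p₁ : P)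
    (h : Q.I p₁ ℓ) : ∃ p₂, p₂ ≠ p₁ ∧ Q.I p₂ ℓ := by
  have hcard := Q.line_deg ℓ
  have h1 : 1 < Nat.card {p // Q.I p ℓ} := by omega
  rw [Finite.one_lt_card_iff_nontrivial] at h1
  obtain ⟨q, hq⟩ := exists_ne (⟨p₁, h⟩ : {p // Q.I p ℓ})
  exact ⟨q.1, fun he => hq (Subtype.ext he), q.2⟩

lemma exists_second_line [Finite L] (Q : GenQuad P L s t) (ht : 1 ≤ t) (p : P) (ℓ₁ : L)
    (h : Q.I p ℓ₁) : ∃ ℓ₂, ℓ₂ ≠ ℓ₁ ∧ Q.I p ℓ₂ := by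
  have hcard := Q.point_deg p
  have h1 : 1 < Nat.card {ℓ // Q.I p ℓ} := by omega
  rw [Finite.one_lt_card_iff_nontrivial] at h1
  obtain ⟨m, hm⟩ := exists_ne (⟨ℓ₁, h⟩ : {ℓ // Q.I p ℓ})
  exact ⟨m.1, fun he => hm (Subtype.ext he), m.2⟩

end Graph

/-- There are no non-trivial perfect codes in generalised quadrangles
admitting a group of automorphisms acting transitively on the code. -/
theorem stmt0 {P L : Type*} [Finite P] [Finite L] {s t : ℕ}
    (Q : GenQuad P L s t) (hs : 1 ≤ s) (ht : 1 ≤ t)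
    (C : Set (P ⊕ L)) (hC2 : 2 ≤ C.ncard) (hCuniv : C ≠ Set.univ)
    (htrans : TransOn (incGraph Q) C C) :
    covRad (incGraph Q) C ≠ (minDist (incGraph Q) C - 1) / 2 := by
  intro hperf
  classical
  obtain ⟨iP⟩ := nonempty_fintype P
  obtain ⟨iL⟩ := nonempty_fintype L
  set G := incGraph Q with hG
  have hdist4 : ∀ x y : P ⊕ L, G.dist x y ≤ 4 := fun x y => by
    obtain ⟨w, hw⟩ := walk_any Q x y
    exact (SimpleGraph.dist_le w).trans hw
  have hreach : ∀ x y : P ⊕ L, G.Reachable x y := fun x y => ⟨(walk_any Q x y).choose⟩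
  have hCfin : C.Finite := Set.toFinite C
  obtain ⟨x₀, hx₀, y₀, hy₀, hxy₀⟩ := (Set.one_lt_ncard hCfin).1 (by omega)
  have hδ4 : minDist G C ≤ 4 :=
    le_trans (Nat.sInf_le ⟨x₀, hx₀, y₀, hy₀, hxy₀, rfl⟩) (hdist4 x₀ y₀)
  have hdtc_le : ∀ γ, distToCode G C γ ≤ 4 := fun γ =>
    le_trans (Nat.sInf_le ⟨x₀, hx₀, rfl⟩) (hdist4 γ x₀)
  have hbdd : BddAbove {d | ∃ γ, distToCode G C γ = d} :=
    ⟨4, by rintro d ⟨γ, rfl⟩; exact hdtc_le γ⟩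
  have hρ_ge : ∀ γ, distToCode G C γ ≤ covRad G C := fun γ => le_csSup hbdd ⟨γ, rfl⟩
  have hdtc_mem : ∀ γ, ∃ x ∈ C, G.dist γ x = distToCode G C γ := fun γ =>
    Nat.sInf_mem (⟨G.dist γ x₀, x₀, hx₀, rfl⟩ :
      Set.Nonempty {d | ∃ x ∈ C, G.dist γ x = d})
  have hmem0 : ∀ γ, distToCode G C γ = 0 → γ ∈ C := by
    intro γ h
    obtain ⟨x, hx, hd⟩ := hdtc_mem γ
    rw [h] at hd
    have := ((hreach γ x).dist_eq_zero_iff).1 hd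
    exact this ▸ hx
  have hρ1 : covRad G C ≤ 1 := by rw [hperf]; omega
  obtain ⟨γ₀, hγ₀⟩ : ∃ γ₀, γ₀ ∉ C := by
    by_contra h
    push_neg at h
    exact hCuniv (Set.eq_univ_iff_forall.2 h)
  have h1ρ : 1 ≤ covRad G C :=
    le_trans (Nat.one_le_iff_ne_zero.2 fun h => hγ₀ (hmem0 γ₀ h)) (hρ_ge γ₀)
  have hρeq : covRad G C = 1 := le_antisymm hρ1 h1ρ
  have hδ3 : 3 ≤ minDist G C := by rw [hρeq] at hperf; omega
  have F0 : ∀ x ∈ C, ∀ y ∈ C, x ≠ y → 3 ≤ G.dist x y := fun x hx y hy hne =>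
    le_trans hδ3 (Nat.sInf_le ⟨x, hx, y, hy, hne, rfl⟩)
  have F1 : ∀ x ∈ C, ∀ y ∈ C, ¬ G.Adj x y := by
    intro x hx y hy hadj
    have h1 : G.dist x y = 1 := SimpleGraph.dist_eq_one_iff_adj.2 hadj
    have h3 := F0 x hx y hy hadj.ne
    omega
  have F2 : ∀ x ∈ C, ∀ y ∈ C, x ≠ y → ∀ z, ¬(G.Adj x z ∧ G.Adj z y) := by
    rintro x hx y hy hne z ⟨ha1, ha2⟩
    have h2 : G.dist x y ≤ 2 :=
      le_trans (SimpleGraph.dist_le (.cons ha1 (.cons ha2 .nil))) (by simp)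
    have h3 := F0 x hx y hy hne
    omega
  have F3 : ∀ γ, γ ∉ C → ∃ x ∈ C, G.Adj γ x := by
    intro γ hγ
    have hle : distToCode G C γ ≤ 1 := (hρ_ge γ).trans (le_of_eq hρeq)
    have hne0 : distToCode G C γ ≠ 0 := fun h => hγ (hmem0 γ h)
    have heq1 : distToCode G C γ = 1 := by omega
    obtain ⟨x, hx, hd⟩ := hdtc_mem γ
    rw [heq1] at hd
    exact ⟨x, hx, SimpleGraph.dist_eq_one_iff_adj.1 hd⟩
  by_cases hCL : ({ℓ : L | Sum.inr ℓ ∈ C} : Set L).Nonempty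
  · by_cases hCP : ({p : P | Sum.inl p ∈ C} : Set P).Nonempty
    · -- mixed case: counting contradiction
      refine GQaux.mixed_false Q hs ht {p | Sum.inl p ∈ C} {ℓ | Sum.inr ℓ ∈ C} hCP hCL
        ?_ ?_ ?_ ?_ ?_
      · intro p hp ℓ hℓ hI
        exact F1 _ hp _ hℓ ((adj_inl_inr Q).2 hI)
      · intro p₁ hp₁ p₂ hp₂ M hI1 hI2
        by_contra hne
        exact F2 _ hp₁ _ hp₂ (fun h => hne (Sum.inl.injEq .. ▸ h)) (Sum.inr M)
          ⟨(adj_inl_inr Q).2 hI1, (adj_inr_inl Q).2 hI2⟩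
      · intro ℓ₁ hℓ₁ ℓ₂ hℓ₂ q hq1 hq2
        by_contra hne
        exact F2 _ hℓ₁ _ hℓ₂ (fun h => hne (Sum.inr.injEq .. ▸ h)) (Sum.inl q)
          ⟨(adj_inr_inl Q).2 hq1, (adj_inl_inr Q).2 hq2⟩
      · intro p hp
        obtain ⟨x, hx, hadj⟩ := F3 (Sum.inl p) hp
        cases x with
        | inl p' => exact absurd hadj (not_adj_inl_inl Q)
        | inr ℓ => exact ⟨ℓ, hx, (adj_inl_inr Q).1 hadj⟩
      · intro ℓ hℓ
        obtain ⟨x, hx, hadj⟩ := F3 (Sum.inr ℓ) hℓ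
        cases x with
        | inr ℓ' => exact absurd hadj (not_adj_inr_inr Q)
        | inl p => exact ⟨p, hx, (adj_inr_inl Q).1 hadj⟩
    · -- no code points: C consists of lines only
      have hCP' : ∀ p : P, Sum.inl p ∉ C := fun p h => hCP ⟨p, h⟩
      obtain ⟨ℓc, hℓc⟩ := hCL
      obtain ⟨p₀, hp₀⟩ := GQaux.nonempty_point_on Q ℓc
      obtain ⟨x₁, hx₁, hadj₁⟩ := F3 (Sum.inl p₀) (hCP' p₀)
      obtain ⟨ℓ₁, hℓ₁I⟩ : ∃ ℓ₁, Sum.inr ℓ₁ ∈ C ∧ Q.I p₀ ℓ₁ := by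
        cases x₁ with
        | inl p' => exact absurd hadj₁ (not_adj_inl_inl Q)
        | inr ℓ' => exact ⟨ℓ', hx₁, (adj_inl_inr Q).1 hadj₁⟩
      obtain ⟨hℓ₁C, hℓ₁⟩ := hℓ₁I
      obtain ⟨ℓ₂, hℓ₂ne, hℓ₂⟩ := exists_second_line Q ht p₀ ℓ₁ hℓ₁
      by_cases hℓ₂C : Sum.inr ℓ₂ ∈ C
      · exact F2 _ hℓ₁C _ hℓ₂C (fun h => hℓ₂ne.symm (Sum.inr.injEq .. ▸ h)) (Sum.inl p₀)
          ⟨(adj_inr_inl Q).2 hℓ₁, (adj_inl_inr Q).2 hℓ₂⟩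
      · obtain ⟨x₂, hx₂, hadj₂⟩ := F3 (Sum.inr ℓ₂) hℓ₂C
        cases x₂ with
        | inr ℓ' => exact absurd hadj₂ (not_adj_inr_inr Q)
        | inl p' => exact hCP' p' hx₂
  · -- no code lines: C consists of points only
    have hCL' : ∀ ℓ : L, Sum.inr ℓ ∉ C := fun ℓ h => hCL ⟨ℓ, h⟩
    obtain ⟨pc, hpc⟩ : ∃ p : P, Sum.inl p ∈ C := by
      cases x₀ with
      | inl p => exact ⟨p, hx₀⟩
      | inr ℓ => exact absurd hx₀ (hCL' ℓ)
    obtain ⟨ℓ₀, hℓ₀⟩ := GQaux.nonempty_line_through Q pc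
    obtain ⟨x₁, hx₁, hadj₁⟩ := F3 (Sum.inr ℓ₀) (hCL' ℓ₀)
    obtain ⟨p₁, hp₁C, hp₁⟩ : ∃ p₁, Sum.inl p₁ ∈ C ∧ Q.I p₁ ℓ₀ := by
      cases x₁ with
      | inr ℓ' => exact absurd hadj₁ (not_adj_inr_inr Q)
      | inl p' => exact ⟨p', hx₁, (adj_inr_inl Q).1 hadj₁⟩
    obtain ⟨p₂, hp₂ne, hp₂⟩ := exists_second_point Q hs ℓ₀ p₁ hp₁
    by_cases hp₂C : Sum.inl p₂ ∈ C
    · exact F2 _ hp₁C _ hp₂C (fun h => hp₂ne.symm (Sum.inl.injEq .. ▸ h)) (Sum.inr ℓ₀)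
        ⟨(adj_inl_inr Q).2 hp₁, (adj_inr_inl Q).2 hp₂⟩
    · obtain ⟨x₂, hx₂, hadj₂⟩ := F3 (Sum.inl p₂) hp₂C
      cases x₂ with
      | inl p' => exact absurd hadj₂ (not_adj_inl_inl Q)
      | inr ℓ' => exact hCL' ℓ' hx₂
end

section
/- Let Q be a generalised quadrangle with point set P and line set L, let Γ be its point-line incidence graph, and let C be a code in Γ with |C| ≥ 2 whose minimum distance δ is odd. If Aut(C) acts transitively on C, then Q is self-dual; that is, there exists an automorphism of Γ that maps the set of point-vertices P onto the set of line-vertices L (and L onto P). -/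
/-!
An element of `Aut(C)` mapping one codeword to another at odd distance exchanges the two sides
of the bipartite incidence graph at that codeword. Since the incidence graph of a generalised
quadrangle is connected, an automorphism either preserves the bipartition or swaps it
everywhere, so this automorphism is a duality of the quadrangle.
-/

namespace SimpleGraph

variable {V : Type*} {G : SimpleGraph V}

theorem Coloring.ne_of_odd_dist (c : G.Coloring Bool) {u v : V} (h : Odd (G.dist u v)) :
    c u ≠ c v := by
  obtain ⟨p, hp⟩ := (Reachable.of_dist_ne_zero h.pos.ne').exists_walk_length_eq_dist
  have := (c.odd_length_iff_not_congr p).mp (hp ▸ h)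
  cases hu : c u <;> cases hv : c v <;> simp_all

theorem Coloring.apply_iso_ne_of_ne (c : G.Coloring Bool) (hG : G.Preconnected) (g : G ≃g G)
    {u : V} (hu : c (g u) ≠ c u) (v : V) : c (g v) ≠ c v := by
  obtain ⟨p⟩ := hG u v
  have hp := c.even_length_iff_congr p
  have hgp := c.even_length_iff_congr (p.map g.toHom)
  rw [Walk.length_map, hp] at hgp
  revert hu hgp
  cases c u <;> cases c v <;> cases c (g u) <;> cases c (g v) <;> simp

end SimpleGraph

theorem exists_odd_dist_of_odd_minDist {V : Type*} {Γ : SimpleGraph V} {C : Set V}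
    (hodd : Odd (minDist Γ C)) : ∃ x ∈ C, ∃ y ∈ C, Odd (Γ.dist x y) := by
  have hne : {d | ∃ x ∈ C, ∃ y ∈ C, x ≠ y ∧ Γ.dist x y = d}.Nonempty := by
    rw [Set.nonempty_iff_ne_empty]
    intro h
    rw [minDist, h, Nat.sInf_empty] at hodd
    exact Nat.not_odd_zero hodd
  obtain ⟨x, hx, y, hy, -, hxy⟩ := Nat.sInf_mem hne
  exact ⟨x, hx, y, hy, hxy ▸ hodd⟩

def IsGraphAut.toIso {V : Type*} {Γ : SimpleGraph V} {g : V ≃ V} (hg : IsGraphAut Γ g) :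
    Γ ≃g Γ :=
  ⟨g, hg _ _⟩

theorem Equiv.image_range_inl_eq_range_inr_of_isLeft_ne {α β : Type*} (g : α ⊕ β ≃ α ⊕ β)
    (hg : ∀ v, (g v).isLeft ≠ v.isLeft) :
    g '' Set.range Sum.inl = Set.range Sum.inr ∧ g '' Set.range Sum.inr = Set.range Sum.inl := by
  have hsymm : ∀ w, (g.symm w).isLeft ≠ w.isLeft := fun w => by
    simpa using (hg (g.symm w)).symm
  simp only [Set.range_inl, Set.range_inr, g.image_eq_preimage_symm]
  constructor <;> ext w <;> have := hsymm w <;> cases w <;> simp_all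

namespace GenQuad

variable {P L : Type*} {s t : ℕ} (Q : GenQuad P L s t)

theorem exists_incident_line (p : P) : ∃ ℓ, Q.I p ℓ := by
  have : Nonempty {ℓ : L // Q.I p ℓ} := Nat.card_pos_iff.mp (Q.point_deg p ▸ t.succ_pos) |>.1
  exact ⟨this.some.1, this.some.2⟩

theorem exists_incident_point (ℓ : L) : ∃ p, Q.I p ℓ := by
  have : Nonempty {p : P // Q.I p ℓ} := Nat.card_pos_iff.mp (Q.line_deg ℓ ▸ s.succ_pos) |>.1
  exact ⟨this.some.1, this.some.2⟩

theorem incGraph_adj_of_incident {p : P} {ℓ : L} (h : Q.I p ℓ) :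
    (incGraph Q).Adj (Sum.inl p) (Sum.inr ℓ) :=
  Or.inl ⟨p, ℓ, rfl, rfl, h⟩

theorem incGraph_reachable_inl_inr (p : P) (ℓ : L) :
    (incGraph Q).Reachable (Sum.inl p) (Sum.inr ℓ) := by
  by_cases h : Q.I p ℓ
  · exact (Q.incGraph_adj_of_incident h).reachable
  · obtain ⟨⟨q, M⟩, ⟨hpM, hqM, hqℓ⟩, -⟩ := Q.gq_axiom p ℓ h
    exact (Q.incGraph_adj_of_incident hpM).reachable.trans <|
      (Q.incGraph_adj_of_incident hqM).reachable.symm.trans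
        (Q.incGraph_adj_of_incident hqℓ).reachable

theorem incGraph_preconnected : (incGraph Q).Preconnected := by
  rintro (p₁ | ℓ₁) (p₂ | ℓ₂)
  · obtain ⟨ℓ, hℓ⟩ := Q.exists_incident_line p₂
    exact (Q.incGraph_reachable_inl_inr p₁ ℓ).trans (Q.incGraph_adj_of_incident hℓ).reachable.symm
  · exact Q.incGraph_reachable_inl_inr p₁ ℓ₂
  · exact (Q.incGraph_reachable_inl_inr p₂ ℓ₁).symm
  · obtain ⟨p, hp⟩ := Q.exists_incident_point ℓ₂
    exact (Q.incGraph_reachable_inl_inr p ℓ₁).symm.trans (Q.incGraph_adj_of_incident hp).reachable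

def incGraphSideColoring : (incGraph Q).Coloring Bool :=
  SimpleGraph.Coloring.mk Sum.isLeft <| by
    rintro _ _ (⟨p, ℓ, rfl, rfl, -⟩ | ⟨p, ℓ, rfl, rfl, -⟩) <;> simp

end GenQuad

theorem stmt1_general {P L : Type*} {s t : ℕ}
    (Q : GenQuad P L s t)
    (C : Set (P ⊕ L))
    (hodd : Odd (minDist (incGraph Q) C))
    (htrans : TransOn (incGraph Q) C C) :
    ∃ g : (P ⊕ L) ≃ (P ⊕ L), IsGraphAut (incGraph Q) g ∧
      g '' (Set.range Sum.inl) = Set.range Sum.inr ∧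
      g '' (Set.range Sum.inr) = Set.range Sum.inl := by
  obtain ⟨x, hx, y, hy, hxy⟩ := exists_odd_dist_of_odd_minDist hodd
  obtain ⟨g, hg, -, rfl⟩ := htrans x hx y hy
  have hswap_x : Q.incGraphSideColoring (hg.toIso x) ≠ Q.incGraphSideColoring x :=
    (Q.incGraphSideColoring.ne_of_odd_dist hxy).symm
  exact ⟨g, hg, g.image_range_inl_eq_range_inr_of_isLeft_ne
    (Q.incGraphSideColoring.apply_iso_ne_of_ne Q.incGraph_preconnected hg.toIso hswap_x)⟩

/-- If a code with odd minimum distance in a generalised quadrangle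
admits a transitive group of automorphisms, then the quadrangle is self-dual: some
automorphism of the incidence graph swaps the point-vertices and the line-vertices. -/
theorem stmt1 {P L : Type*} [Finite P] [Finite L] {s t : ℕ}
    (Q : GenQuad P L s t) (hs : 1 ≤ s) (ht : 1 ≤ t)
    (C : Set (P ⊕ L)) (hC2 : 2 ≤ C.ncard)
    (hodd : Odd (minDist (incGraph Q) C))
    (htrans : TransOn (incGraph Q) C C) :
    ∃ g : (P ⊕ L) ≃ (P ⊕ L), IsGraphAut (incGraph Q) g ∧
      g '' (Set.range Sum.inl) = Set.range Sum.inr ∧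
      g '' (Set.range Sum.inr) = Set.range Sum.inl :=
  stmt1_general Q C hodd htrans
end

section
/- Let p₁ and p₂ be two distinct non-collinear points of W₃(q), i.e. two 1-dimensional subspaces ⟨u⟩ ≠ ⟨v⟩ of V with f(u,v) ≠ 0. Then the code C = {p₁, p₂} in the point-line incidence graph of W₃(q) has minimum distance 4 and is neighbour-transitive. -/
/-- The standard nondegenerate alternating bilinear form on `𝔽_q⁴`:
`f(x,y) = x₁y₂ − x₂y₁ + x₃y₄ − x₄y₃`. -/
def sform {F : Type*} [Field F] (x y : Fin 4 → F) : F :=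
  x 0 * y 1 - x 1 * y 0 + x 2 * y 3 - x 3 * y 2

/-- A line of `W₃(q)`: a totally isotropic `2`-dimensional subspace of `𝔽_q⁴`. -/
def IsIsoLine (F : Type*) [Field F] (W : Submodule F (Fin 4 → F)) : Prop :=
  Module.finrank F W = 2 ∧ ∀ x ∈ W, ∀ y ∈ W, sform x y = 0

/-- The points of `W₃(q)`: the `1`-dimensional subspaces of `𝔽_q⁴`. -/
def Pt (F : Type*) [Field F] := {W : Submodule F (Fin 4 → F) // Module.finrank F W = 1}

/-- The lines of `W₃(q)`: the totally isotropic `2`-dimensional subspaces of `𝔽_q⁴`. -/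
def Ln (F : Type*) [Field F] := {W : Submodule F (Fin 4 → F) // IsIsoLine F W}

/-- The point-line incidence graph of the generalised quadrangle `W₃(q)`. -/
def W3 (F : Type*) [Field F] : SimpleGraph (Pt F ⊕ Ln F) where
  Adj x y :=
    (∃ p ℓ, x = Sum.inl p ∧ y = Sum.inr ℓ ∧ p.1 ≤ ℓ.1) ∨
    (∃ p ℓ, x = Sum.inr ℓ ∧ y = Sum.inl p ∧ p.1 ≤ ℓ.1)
  symm := ⟨by
    rintro x y (⟨p, ℓ, rfl, rfl, h⟩ | ⟨p, ℓ, rfl, rfl, h⟩)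
    · exact Or.inr ⟨p, ℓ, rfl, rfl, h⟩
    · exact Or.inl ⟨p, ℓ, rfl, rfl, h⟩⟩
  loopless := ⟨by
    rintro x (⟨p, ℓ, rfl, h, -⟩ | ⟨p, ℓ, rfl, h, -⟩) <;> exact absurd h (by simp)⟩

/-!
Since `f(u,v) ≠ 0`, no line contains both points, so in the bipartite graph `Γ` their distance is
at least `4`; a nonzero `w` orthogonal to `u` and `v` gives the path
`⟨u⟩ – ⟨u,w⟩ – ⟨w⟩ – ⟨v,w⟩ – ⟨v⟩`.

For neighbour-transitivity, every point of `C` is `⟨a⟩`, and every line of `C₁` (a line through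
`⟨u⟩` or `⟨v⟩`) is `⟨a,w⟩`, for some frame `(a, b, w, z)` with `f(a,b) = f(w,z) = f(u,v)`, all
other pairings zero, and `(a, b) = (u, v)` or `(v, -u)`. The linear map carrying one such frame
to another is an isometry of `f`, so it induces an automorphism of `Γ` fixing `C` setwise.
-/

section CodesInGraphs

variable {V : Type*} (Γ : SimpleGraph V)

lemma distToCode_pair (a b γ : V) :
    distToCode Γ {a, b} γ = min (Γ.dist γ a) (Γ.dist γ b) := by
  have hset : {d | ∃ x ∈ ({a, b} : Set V), Γ.dist γ x = d} = {Γ.dist γ a, Γ.dist γ b} := by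
    ext d
    simp [eq_comm]
  rw [distToCode, hset, csInf_pair]

lemma minDist_pair {a b : V} (hab : a ≠ b) : minDist Γ {a, b} = Γ.dist a b := by
  have hset : {d | ∃ x ∈ ({a, b} : Set V), ∃ y ∈ ({a, b} : Set V), x ≠ y ∧ Γ.dist x y = d} =
      {Γ.dist a b} := by
    ext d
    simp only [Set.mem_ofPred_eq, Set.mem_insert_iff, Set.mem_singleton_iff]
    constructor
    · rintro ⟨x, rfl | rfl, y, rfl | rfl, hxy, rfl⟩ <;> simp_all [SimpleGraph.dist_comm]
    · rintro rfl
      exact ⟨a, .inl rfl, b, .inr rfl, hab, rfl⟩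
  rw [minDist, hset, csInf_singleton]

lemma adj_or_adj_of_mem_nbhd_one_pair {a b γ : V} (hγ : γ ∈ nbhd Γ {a, b} 1) :
    Γ.Adj γ a ∨ Γ.Adj γ b := by
  have h : min (Γ.dist γ a) (Γ.dist γ b) = 1 := (distToCode_pair Γ a b γ).symm.trans hγ
  rw [← SimpleGraph.dist_eq_one_iff_adj, ← SimpleGraph.dist_eq_one_iff_adj]
  omega

end CodesInGraphs

lemma SimpleGraph.dist_eq_four {V : Type*} {G : SimpleGraph V} (c : G.Coloring Bool) {a b : V}
    (hc : c a = c b) (hab : a ≠ b) (hn : G.commonNeighbors a b = ∅) (p : G.Walk a b)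
    (hp : p.length = 4) : G.dist a b = 4 := by
  have hr := p.reachable
  obtain ⟨q, hq⟩ := hr.exists_walk_length_eq_dist
  have heven : Even (G.dist a b) := hq ▸ (c.even_length_iff_congr q).mpr (by rw [hc])
  have hle : G.dist a b ≤ 4 := hp ▸ G.dist_le p
  have h0 : G.dist a b ≠ 0 := hr.dist_eq_zero_iff.not.mpr hab
  have h2 : G.dist a b ≠ 2 := fun h2 => by
    have : G.edist a b = 2 := by rw [← hr.coe_dist_eq_edist, h2]; rfl
    exact (edist_eq_two_iff.mp this).2.2.ne_empty hn
  obtain ⟨k, hk⟩ := heven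
  omega

namespace W3

open Submodule Module

variable {F : Type*} [Field F]

lemma sform_self (x : Fin 4 → F) : sform x x = 0 := by unfold sform; ring

lemma sform_swap (x y : Fin 4 → F) : sform y x = -sform x y := by unfold sform; ring

lemma sform_neg_left (x y : Fin 4 → F) : sform (-x) y = -sform x y := by simp [sform]; ring

lemma sform_neg_right (x y : Fin 4 → F) : sform x (-y) = -sform x y := by simp [sform]; ring

lemma sform_rotate (u v : Fin 4 → F) : sform v (-u) = sform u v := by
  rw [sform_neg_right, sform_swap, neg_neg]

@[simp]
lemma sform_add_right (x y y' : Fin 4 → F) : sform x (y + y') = sform x y + sform x y' := by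
  simp [sform]; ring

@[simp]
lemma sform_smul_right (a : F) (x y : Fin 4 → F) : sform x (a • y) = a * sform x y := by
  simp [sform]; ring

def sformBilin : LinearMap.BilinForm F (Fin 4 → F) :=
  LinearMap.mk₂ F sform (fun _ _ _ => by simp [sform]; ring) (fun _ _ _ => by simp [sform]; ring)
    (fun _ _ _ => by simp [sform]; ring) (fun _ _ _ => by simp [sform]; ring)

@[simp]
lemma sformBilin_apply (x y : Fin 4 → F) : sformBilin x y = sform x y := rfl

lemma eq_zero_of_forall_sform_eq_zero {x : Fin 4 → F} (h : ∀ y, sform x y = 0) : x = 0 := by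
  funext i
  fin_cases i
  · simpa [sform] using h ![0, 1, 0, 0]
  · simpa [sform] using h ![1, 0, 0, 0]
  · simpa [sform] using h ![0, 0, 0, 1]
  · simpa [sform] using h ![0, 0, 1, 0]

lemma exists_ne_zero_sform_eq_zero (u v : Fin 4 → F) :
    ∃ w : Fin 4 → F, w ≠ 0 ∧ sform u w = 0 ∧ sform v w = 0 := by
  let A : (Fin 4 → F) →ₗ[F] (Fin 2 → F) := LinearMap.pi ![sformBilin u, sformBilin v]
  have hker : LinearMap.ker A ≠ ⊥ := LinearMap.ker_ne_bot_of_finrank_lt (by simp)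
  obtain ⟨w, hw, hw0⟩ := (Submodule.ne_bot_iff _).mp hker
  have hA := LinearMap.mem_ker.mp hw
  exact ⟨w, hw0, by simpa [A] using congrFun hA 0, by simpa [A] using congrFun hA 1⟩

lemma isotropic_span_pair {x y : Fin 4 → F} (h : sform x y = 0) :
    ∀ a ∈ span F {x, y}, ∀ b ∈ span F {x, y}, sform a b = 0 := by
  intro a ha b hb
  obtain ⟨a₁, a₂, rfl⟩ := mem_span_pair.mp ha
  obtain ⟨b₁, b₂, rfl⟩ := mem_span_pair.mp hb
  simp only [sform, Pi.add_apply, Pi.smul_apply, smul_eq_mul] at h ⊢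
  linear_combination (a₁ * b₂ - a₂ * b₁) * h

structure IsSympFrame (c : F) (u v w z : Fin 4 → F) : Prop where
  uv : sform u v = c
  wz : sform w z = c
  uw : sform u w = 0
  uz : sform u z = 0
  vw : sform v w = 0
  vz : sform v z = 0

def sympGram (c : F) : Matrix (Fin 4) (Fin 4) F :=
  !![0, c, 0, 0; -c, 0, 0, 0; 0, 0, 0, c; 0, 0, -c, 0]

namespace IsSympFrame

variable {c : F} {u v w z : Fin 4 → F}

lemma sform_eq_sympGram (h : IsSympFrame c u v w z) (i j : Fin 4) :
    sform (![u, v, w, z] i) (![u, v, w, z] j) = sympGram c i j := by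
  fin_cases i <;> fin_cases j <;>
    simp [sympGram, sform_self, h.uv, h.wz, h.uw, h.uz, h.vw, h.vz, sform_swap u v,
      sform_swap u w, sform_swap u z, sform_swap v w, sform_swap v z, sform_swap w z]

lemma rotate (h : IsSympFrame c u v w z) : IsSympFrame c v (-u) w z where
  uv := (sform_rotate u v).trans h.uv
  wz := h.wz
  uw := h.vw
  uz := h.vz
  vw := by rw [sform_neg_left, h.uw, neg_zero]
  vz := by rw [sform_neg_left, h.uz, neg_zero]

lemma linearIndependent (h : IsSympFrame c u v w z) (hc : c ≠ 0) :
    LinearIndependent F ![u, v, w, z] := by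
  rw [Fintype.linearIndependent_iff]
  intro a ha i
  have key : ∀ j, ∑ k, a k * sympGram c k j = 0 := fun j => by
    simpa [map_sum, ← h.sform_eq_sympGram] using congrArg (sformBilin.flip (![u, v, w, z] j)) ha
  fin_cases i
  · simpa [Fin.sum_univ_four, sympGram, hc] using key 1
  · simpa [Fin.sum_univ_four, sympGram, hc] using key 0
  · simpa [Fin.sum_univ_four, sympGram, hc] using key 3
  · simpa [Fin.sum_univ_four, sympGram, hc] using key 2

lemma exists_isometry {u' v' w' z' : Fin 4 → F} (h : IsSympFrame c u v w z)
    (h' : IsSympFrame c u' v' w' z') (hc : c ≠ 0) :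
    ∃ e : (Fin 4 → F) ≃ₗ[F] (Fin 4 → F), (∀ x y, sform (e x) (e y) = sform x y) ∧
      e u = u' ∧ e v = v' ∧ e w = w' ∧ e z = z' := by
  let b := basisOfLinearIndependentOfCardEqFinrank (h.linearIndependent hc) (by simp)
  let b' := basisOfLinearIndependentOfCardEqFinrank (h'.linearIndependent hc) (by simp)
  let e := b.equiv b' (Equiv.refl _)
  have he : ∀ i, e (![u, v, w, z] i) = ![u', v', w', z'] i := fun i => by
    simpa [b, b'] using b.equiv_apply i b' (Equiv.refl _)
  have hiso : sformBilin.compl₁₂ (e : (Fin 4 → F) →ₗ[F] _) (e : (Fin 4 → F) →ₗ[F] _) =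
      sformBilin :=
    LinearMap.BilinForm.ext_basis b fun i j => by
      simp [b, he, h.sform_eq_sympGram, h'.sform_eq_sympGram]
  exact ⟨e, fun x y => by simpa using LinearMap.congr_fun₂ hiso x y, he 0, he 1, he 2, he 3⟩

lemma finrank_span_uw (h : IsSympFrame c u v w z) (hc : c ≠ 0) :
    finrank F (span F {u, w}) = 2 := by
  have hli : LinearIndependent F ![u, w] := by
    convert (h.linearIndependent hc).comp ![0, 2] (by decide) using 1
    ext i : 1
    fin_cases i <;> rfl
  rw [← Matrix.range_cons_cons_empty, finrank_span_eq_card hli, Fintype.card_fin]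

lemma isIsoLine (h : IsSympFrame c u v w z) (hc : c ≠ 0) : IsIsoLine F (span F {u, w}) :=
  ⟨h.finrank_span_uw hc, isotropic_span_pair h.uw⟩

end IsSympFrame

lemma exists_isSympFrame {c : F} {u v w : Fin 4 → F} (huv : sform u v = c) (hc : c ≠ 0)
    (hw : w ≠ 0) (huw : sform u w = 0) (hvw : sform v w = 0) :
    ∃ z, IsSympFrame c u v w z := by
  obtain ⟨x, hx⟩ : ∃ x, sform w x ≠ 0 := by
    by_contra! hcon
    exact hw (eq_zero_of_forall_sform_eq_zero hcon)
  set z := x + (sform v x / c) • u + (sform x u / c) • v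
  have hwz : sform w z = sform w x := by
    simp [z, sform_swap u w, sform_swap v w, huw, hvw]
  have huz : sform u z = 0 := by
    simp [z, sform_self, huv, sform_swap u x, hc]
  have hvz : sform v z = 0 := by
    simp [z, sform_self, sform_swap u v, huv, hc]
  refine ⟨(c / sform w x) • z, huv, ?_, huw, ?_, hvw, ?_⟩
  · rw [sform_smul_right, hwz, div_mul_cancel₀ _ hx]
  · rw [sform_smul_right, huz, mul_zero]
  · rw [sform_smul_right, hvz, mul_zero]

lemma exists_isSympFrame_of_le {c : F} {a b : Fin 4 → F} (hab : sform a b = c) (hc : c ≠ 0)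
    (ℓ : Ln F) (haℓ : span F {a} ≤ ℓ.1) :
    ∃ w z, IsSympFrame c a b w z ∧ ℓ.1 = span F {a, w} := by
  have ha : a ≠ 0 := by rintro rfl; simp [sform] at hab; exact hc hab.symm
  have ha' : a ∈ ℓ.1 := haℓ (mem_span_singleton_self a)
  obtain ⟨w₀, hw₀ℓ, hw₀a⟩ := SetLike.exists_of_lt <| haℓ.lt_of_ne fun h => by
    have h2 := ℓ.2.1
    rw [← h, finrank_span_singleton ha] at h2
    exact absurd h2 (by decide)
  set w := w₀ + (sform b w₀ / c) • a
  have hwℓ : w ∈ ℓ.1 := add_mem hw₀ℓ (smul_mem _ _ ha')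
  have hw : w ≠ 0 := fun h0 => hw₀a <| by
    rw [eq_neg_of_add_eq_zero_left h0]
    exact neg_mem (smul_mem _ _ (mem_span_singleton_self a))
  have hbw : sform b w = 0 := by simp [w, sform_swap a b, hab, hc]
  obtain ⟨z, hframe⟩ := exists_isSympFrame hab hc hw (ℓ.2.2 a ha' w hwℓ) hbw
  refine ⟨w, z, hframe, (eq_of_le_of_finrank_eq ?_ ?_).symm⟩
  · exact span_le.mpr (Set.insert_subset ha' (Set.singleton_subset_iff.mpr hwℓ))
  · rw [hframe.finrank_span_uw hc, ℓ.2.1]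

lemma _root_.Pt.val_inj {p q : Pt F} : p.1 = q.1 ↔ p = q := Subtype.val_inj

lemma _root_.Ln.val_inj {ℓ m : Ln F} : ℓ.1 = m.1 ↔ ℓ = m := Subtype.val_inj

@[simp]
lemma adj_inl_inr {p : Pt F} {ℓ : Ln F} : (W3 F).Adj (.inl p) (.inr ℓ) ↔ p.1 ≤ ℓ.1 := by
  simp [W3]

@[simp]
lemma adj_inr_inl {p : Pt F} {ℓ : Ln F} : (W3 F).Adj (.inr ℓ) (.inl p) ↔ p.1 ≤ ℓ.1 := by
  simp [W3]

@[simp]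
lemma not_adj_inl_inl (p q : Pt F) : ¬(W3 F).Adj (.inl p) (.inl q) := by
  simp [W3]

@[simp]
lemma not_adj_inr_inr (ℓ m : Ln F) : ¬(W3 F).Adj (.inr ℓ) (.inr m) := by
  simp [W3]

def sideColoring : (W3 F).Coloring Bool :=
  SimpleGraph.Coloring.mk Sum.isLeft fun {x y} h => by
    rcases x with p | ℓ <;> rcases y with q | m <;> simp_all

lemma commonNeighbors_inl_eq_empty {u v : Fin 4 → F} (huv : sform u v ≠ 0) {P Q : Pt F}
    (hP : P.1 = span F {u}) (hQ : Q.1 = span F {v}) :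
    (W3 F).commonNeighbors (.inl P) (.inl Q) = ∅ := by
  ext (p | ℓ)
  · simp [SimpleGraph.mem_commonNeighbors]
  · simp only [SimpleGraph.mem_commonNeighbors, adj_inl_inr, hP, hQ, span_singleton_le_iff_mem,
      Set.mem_empty_iff_false, iff_false, not_and]
    exact fun hu hv => huv (ℓ.2.2 u hu v hv)

namespace IsSympFrame

variable {c : F} {u v w z : Fin 4 → F}

lemma exists_walk_length_four (h : IsSympFrame c u v w z) (hc : c ≠ 0) {P Q : Pt F}
    (hP : P.1 = span F {u}) (hQ : Q.1 = span F {v}) :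
    ∃ p : (W3 F).Walk (.inl P) (.inl Q), p.length = 4 := by
  let L : Ln F := ⟨span F {u, w}, h.isIsoLine hc⟩
  let M : Ln F := ⟨span F {v, w}, h.rotate.isIsoLine hc⟩
  let R : Pt F := ⟨span F {w}, finrank_span_singleton ((h.linearIndependent hc).ne_zero 2)⟩
  have h₁ : (W3 F).Adj (.inl P) (.inr L) := adj_inl_inr.mpr (by simp [L, hP, mem_span_of_mem])
  have h₂ : (W3 F).Adj (.inr L) (.inl R) := adj_inr_inl.mpr (by simp [L, R, mem_span_of_mem])
  have h₃ : (W3 F).Adj (.inl R) (.inr M) := adj_inl_inr.mpr (by simp [M, R, mem_span_of_mem])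
  have h₄ : (W3 F).Adj (.inr M) (.inl Q) := adj_inr_inl.mpr (by simp [M, hQ, mem_span_of_mem])
  exact ⟨.cons h₁ (.cons h₂ (.cons h₃ (.cons h₄ .nil))), rfl⟩

lemma dist_inl_eq_four (h : IsSympFrame c u v w z) (hc : c ≠ 0) {P Q : Pt F}
    (hP : P.1 = span F {u}) (hQ : Q.1 = span F {v}) (hPQ : P ≠ Q) :
    (W3 F).dist (.inl P) (.inl Q) = 4 := by
  obtain ⟨p, hp⟩ := h.exists_walk_length_four hc hP hQ
  exact SimpleGraph.dist_eq_four sideColoring rfl (by simpa using hPQ)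
    (commonNeighbors_inl_eq_empty (h.uv ▸ hc) hP hQ) p hp

end IsSympFrame

section Isometry

variable (e : (Fin 4 → F) ≃ₗ[F] (Fin 4 → F))

def ptMap : Pt F ≃ Pt F :=
  (orderIsoMapComap e).toEquiv.subtypeEquiv fun W => by
    rw [OrderIso.coe_toEquiv, orderIsoMapComap_apply, LinearEquiv.finrank_map_eq]

lemma isIsoLine_map_iff (he : ∀ x y, sform (e x) (e y) = sform x y)
    (W : Submodule F (Fin 4 → F)) :
    IsIsoLine F (W.map (e : (Fin 4 → F) →ₗ[F] (Fin 4 → F))) ↔ IsIsoLine F W := by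
  simp only [IsIsoLine, LinearEquiv.finrank_map_eq, mem_map, forall_exists_index, and_imp,
    forall_apply_eq_imp_iff₂, LinearEquiv.coe_coe, he]

def lnMap (he : ∀ x y, sform (e x) (e y) = sform x y) : Ln F ≃ Ln F :=
  (orderIsoMapComap e).toEquiv.subtypeEquiv fun W => by
    rw [OrderIso.coe_toEquiv, orderIsoMapComap_apply, isIsoLine_map_iff e he]

def isometryAut (he : ∀ x y, sform (e x) (e y) = sform x y) : Pt F ⊕ Ln F ≃ Pt F ⊕ Ln F :=
  Equiv.sumCongr (ptMap e) (lnMap e he)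

variable {e} {he : ∀ x y, sform (e x) (e y) = sform x y}

@[simp]
lemma coe_ptMap (p : Pt F) : (ptMap e p).1 = p.1.map (e : (Fin 4 → F) →ₗ[F] (Fin 4 → F)) := rfl

@[simp]
lemma coe_lnMap (ℓ : Ln F) :
    (lnMap e he ℓ).1 = ℓ.1.map (e : (Fin 4 → F) →ₗ[F] (Fin 4 → F)) := rfl

@[simp]
lemma isometryAut_inl (p : Pt F) : isometryAut e he (.inl p) = .inl (ptMap e p) := rfl

@[simp]
lemma isometryAut_inr (ℓ : Ln F) : isometryAut e he (.inr ℓ) = .inr (lnMap e he ℓ) := rfl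

lemma isGraphAut_isometryAut : IsGraphAut (W3 F) (isometryAut e he) := by
  rintro (p | ℓ) (q | m) <;> simp [map_le_map_iff_of_injective e.injective]

end Isometry

lemma exists_isGraphAut_of_isSympFrame {c : F} (hc : c ≠ 0) {P Q : Pt F}
    {a b w z a' b' w' z' : Fin 4 → F} (h : IsSympFrame c a b w z)
    (h' : IsSympFrame c a' b' w' z')
    (hab : ({span F {a}, span F {b}} : Set (Submodule F (Fin 4 → F))) = {P.1, Q.1})
    (hab' : ({span F {a'}, span F {b'}} : Set (Submodule F (Fin 4 → F))) = {P.1, Q.1}) :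
    ∃ g : Pt F ⊕ Ln F ≃ Pt F ⊕ Ln F, IsGraphAut (W3 F) g ∧
      (∀ x, g x ∈ ({.inl P, .inl Q} : Set (Pt F ⊕ Ln F)) ↔ x ∈ ({.inl P, .inl Q} : Set _)) ∧
      (∀ p p' : Pt F, p.1 = span F {a} → p'.1 = span F {a'} → g (.inl p) = .inl p') ∧
      (∀ ℓ ℓ' : Ln F, ℓ.1 = span F {a, w} → ℓ'.1 = span F {a', w'} →
        g (.inr ℓ) = .inr ℓ') := by
  obtain ⟨e, he, hea, heb, hew, -⟩ := h.exists_isometry h' hc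
  let σ : Submodule F (Fin 4 → F) → Submodule F (Fin 4 → F) :=
    map (e : (Fin 4 → F) →ₗ[F] (Fin 4 → F))
  have hσ : σ '' {span F {a}, span F {b}} = {span F {a'}, span F {b'}} := by
    simp [σ, Set.image_pair, map_span, hea, heb]
  rw [hab, hab'] at hσ
  have hmem : ∀ W, σ W ∈ ({P.1, Q.1} : Set _) ↔ W ∈ ({P.1, Q.1} : Set _) := fun W => by
    conv_lhs => rw [← hσ]
    exact (map_injective_of_injective e.injective).mem_set_image
  refine ⟨isometryAut e he, isGraphAut_isometryAut, ?_, ?_, ?_⟩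
  · rintro (p | ℓ)
    · simpa [← Pt.val_inj] using hmem p.1
    · simp
  · intro p p' hp hp'
    simp [← Pt.val_inj, hp, hp', map_span, hea]
  · intro ℓ ℓ' hℓ hℓ'
    simp [← Ln.val_inj, hℓ, hℓ', map_span, Set.image_pair, hea, hew]

section PairCode

variable {u v : Fin 4 → F} {P Q : Pt F}

lemma pair_span_rotate (hP : P.1 = span F {u}) (hQ : Q.1 = span F {v}) :
    ({span F {v}, span F {-u}} : Set (Submodule F (Fin 4 → F))) = {P.1, Q.1} := by
  rw [hP, hQ, ← Set.neg_singleton, span_neg, Set.pair_comm]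

lemma exists_isSympFrame_of_mem_pair (huv : sform u v ≠ 0) (hP : P.1 = span F {u})
    (hQ : Q.1 = span F {v}) {R : Pt F} (hR : R = P ∨ R = Q) :
    ∃ a b w z, IsSympFrame (sform u v) a b w z ∧
      ({span F {a}, span F {b}} : Set (Submodule F (Fin 4 → F))) = {P.1, Q.1} ∧
      R.1 = span F {a} := by
  obtain ⟨w, hw, huw, hvw⟩ := exists_ne_zero_sform_eq_zero u v
  obtain ⟨z, h⟩ := exists_isSympFrame rfl huv hw huw hvw
  rcases hR with rfl | rfl
  · exact ⟨u, v, w, z, h, by rw [hP, hQ], hP⟩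
  · exact ⟨v, -u, w, z, h.rotate, pair_span_rotate hP hQ, hQ⟩

lemma exists_isSympFrame_of_mem_pair_of_le (huv : sform u v ≠ 0) (hP : P.1 = span F {u})
    (hQ : Q.1 = span F {v}) {R : Pt F} (hR : R = P ∨ R = Q) {ℓ : Ln F} (hRℓ : R.1 ≤ ℓ.1) :
    ∃ a b w z, IsSympFrame (sform u v) a b w z ∧
      ({span F {a}, span F {b}} : Set (Submodule F (Fin 4 → F))) = {P.1, Q.1} ∧
      ℓ.1 = span F {a, w} := by
  rcases hR with rfl | rfl
  · obtain ⟨w, z, h, hℓ⟩ := exists_isSympFrame_of_le rfl huv ℓ (hP ▸ hRℓ)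
    exact ⟨u, v, w, z, h, by rw [hP, hQ], hℓ⟩
  · obtain ⟨w, z, h, hℓ⟩ := exists_isSympFrame_of_le (sform_rotate u v) huv ℓ (hQ ▸ hRℓ)
    exact ⟨v, -u, w, z, h, pair_span_rotate hP hQ, hℓ⟩

lemma exists_line_of_mem_nbhd_one {x : Pt F ⊕ Ln F} (hx : x ∈ nbhd (W3 F) {.inl P, .inl Q} 1) :
    ∃ ℓ : Ln F, x = .inr ℓ ∧ ∃ R, (R = P ∨ R = Q) ∧ R.1 ≤ ℓ.1 := by
  rcases x with p | ℓ
  · rcases adj_or_adj_of_mem_nbhd_one_pair _ hx with h | h <;> simp at h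
  · rcases adj_or_adj_of_mem_nbhd_one_pair _ hx with h | h
    · exact ⟨ℓ, rfl, P, .inl rfl, adj_inr_inl.mp h⟩
    · exact ⟨ℓ, rfl, Q, .inr rfl, adj_inr_inl.mp h⟩

lemma transOn_pair (huv : sform u v ≠ 0) (hP : P.1 = span F {u}) (hQ : Q.1 = span F {v}) :
    TransOn (W3 F) {.inl P, .inl Q} {.inl P, .inl Q} := by
  have hframe : ∀ x ∈ ({.inl P, .inl Q} : Set (Pt F ⊕ Ln F)), ∃ R, x = .inl R ∧
      ∃ a b w z, IsSympFrame (sform u v) a b w z ∧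
        ({span F {a}, span F {b}} : Set (Submodule F (Fin 4 → F))) = {P.1, Q.1} ∧
        R.1 = span F {a} := by
    rintro x (rfl | rfl)
    exacts [⟨P, rfl, exists_isSympFrame_of_mem_pair huv hP hQ (.inl rfl)⟩,
      ⟨Q, rfl, exists_isSympFrame_of_mem_pair huv hP hQ (.inr rfl)⟩]
  intro x hx y hy
  obtain ⟨R, rfl, a, b, w, z, h, hab, hR⟩ := hframe x hx
  obtain ⟨R', rfl, a', b', w', z', h', hab', hR'⟩ := hframe y hy
  obtain ⟨g, hg, hC, hpt, -⟩ := exists_isGraphAut_of_isSympFrame huv h h' hab hab'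
  exact ⟨g, hg, hC, hpt R R' hR hR'⟩

lemma transOn_nbhd_one_pair (huv : sform u v ≠ 0) (hP : P.1 = span F {u})
    (hQ : Q.1 = span F {v}) :
    TransOn (W3 F) {.inl P, .inl Q} (nbhd (W3 F) {.inl P, .inl Q} 1) := by
  intro x hx y hy
  obtain ⟨ℓ, rfl, R, hR, hRℓ⟩ := exists_line_of_mem_nbhd_one hx
  obtain ⟨ℓ', rfl, R', hR', hRℓ'⟩ := exists_line_of_mem_nbhd_one hy
  obtain ⟨a, b, w, z, h, hab, hℓ⟩ := exists_isSympFrame_of_mem_pair_of_le huv hP hQ hR hRℓ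
  obtain ⟨a', b', w', z', h', hab', hℓ'⟩ :=
    exists_isSympFrame_of_mem_pair_of_le huv hP hQ hR' hRℓ'
  obtain ⟨g, hg, hC, -, hln⟩ := exists_isGraphAut_of_isSympFrame huv h h' hab hab'
  exact ⟨g, hg, hC, hln ℓ ℓ' hℓ hℓ'⟩

end PairCode

end W3

open W3 in
theorem stmt7_general (F : Type*) [Field F]
    (u v : Fin 4 → F) (hu : u ≠ 0) (hv : v ≠ 0)
    (hne : Submodule.span F {u} ≠ Submodule.span F {v})
    (hf : sform u v ≠ 0) :
    minDist (W3 F)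
        {Sum.inl (⟨Submodule.span F {u}, finrank_span_singleton hu⟩ : Pt F),
         Sum.inl (⟨Submodule.span F {v}, finrank_span_singleton hv⟩ : Pt F)} = 4 ∧
    NeighbourTransitive (W3 F)
        {Sum.inl (⟨Submodule.span F {u}, finrank_span_singleton hu⟩ : Pt F),
         Sum.inl (⟨Submodule.span F {v}, finrank_span_singleton hv⟩ : Pt F)} := by
  set P : Pt F := ⟨Submodule.span F {u}, finrank_span_singleton hu⟩
  set Q : Pt F := ⟨Submodule.span F {v}, finrank_span_singleton hv⟩
  have hPQ : P ≠ Q := fun h => hne (congrArg Subtype.val h)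
  obtain ⟨w, hw, huw, hvw⟩ := exists_ne_zero_sform_eq_zero u v
  obtain ⟨z, hframe⟩ := exists_isSympFrame rfl hf hw huw hvw
  exact ⟨(minDist_pair _ (Sum.inl_injective.ne hPQ)).trans
      (hframe.dist_inl_eq_four hf rfl rfl hPQ),
    transOn_pair hf rfl rfl, transOn_nbhd_one_pair hf rfl rfl⟩

/-- A pair of distinct non-collinear points `⟨u⟩ ≠ ⟨v⟩` (with
`f(u,v) ≠ 0`) of `W₃(q)` forms a neighbour-transitive code of minimum distance `4`. -/
theorem stmt7 (F : Type*) [Field F] [Fintype F]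
    (u v : Fin 4 → F) (hu : u ≠ 0) (hv : v ≠ 0)
    (hne : Submodule.span F {u} ≠ Submodule.span F {v})
    (hf : sform u v ≠ 0) :
    minDist (W3 F)
        {Sum.inl (⟨Submodule.span F {u}, finrank_span_singleton hu⟩ : Pt F),
         Sum.inl (⟨Submodule.span F {v}, finrank_span_singleton hv⟩ : Pt F)} = 4 ∧
    NeighbourTransitive (W3 F)
        {Sum.inl (⟨Submodule.span F {u}, finrank_span_singleton hu⟩ : Pt F),
         Sum.inl (⟨Submodule.span F {v}, finrank_span_singleton hv⟩ : Pt F)} :=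
  stmt7_general F u v hu hv hne hf
end
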